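/- An argument ⟨Γ, Δ⟩ between finite sets of formulas is {1}-symmetric valid (no probability distribution gives every premise probability 1 and every conclusion probability 0) if and only if it is classically valid. -/

import Mathlib

/-- Propositional formulas: atoms, negation, disjunction. -/
inductive Fml : Type
  | atom : ℕ → Fml
  | neg : Fml → Fml
  | or : Fml → Fml → Fml
deriving DecidableEq

namespace Fml

def and (φ ψ : Fml) : Fml := neg (or (neg φ) (neg ψ))

def bot : Fml := and (atom 0) (neg (atom 0))

def imp (φ ψ : Fml) : Fml := or (neg φ) ψ

def eval (v : ℕ → Bool) : Fml → Bool
  | atom n => v n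
  | neg φ => !(eval v φ)
  | or φ ψ => (eval v φ) || (eval v ψ)

end Fml

/-- Two formulas are jointly classically unsatisfiable. -/
def Incompatible (φ ψ : Fml) : Prop :=
  ∀ v : ℕ → Bool, ¬(φ.eval v = true ∧ ψ.eval v = true)

/-- Classical (Set-Set) validity. -/
def ClValid (Γ Δ : Finset Fml) : Prop :=
  ∀ v : ℕ → Bool, (∀ γ ∈ Γ, γ.eval v = true) → ∃ δ ∈ Δ, δ.eval v = true

/-- Classical single-conclusion entailment. -/
def ClEntails (Γ : Finset Fml) (φ : Fml) : Prop :=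
  ∀ v : ℕ → Bool, (∀ γ ∈ Γ, γ.eval v = true) → φ.eval v = true

def ClConsistent (Γ : Finset Fml) : Prop :=
  ∃ v : ℕ → Bool, ∀ γ ∈ Γ, γ.eval v = true

def Tautology (φ : Fml) : Prop := ∀ v : ℕ → Bool, φ.eval v = true

/-- A probability distribution on formulas. -/
structure ProbDist where
  p : Fml → ℝ
  nonneg : ∀ φ, 0 ≤ p φ
  le_one : ∀ φ, p φ ≤ 1
  bot_eq : p Fml.bot = 0
  neg_eq : ∀ φ, p (Fml.neg φ) = 1 - p φ
  add_eq : ∀ φ ψ, Incompatible φ ψ → p (Fml.or φ ψ) = p φ + p ψ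

/-- A probabilistic model: worlds with classical valuations and a finitely
additive probability measure on subsets of worlds. -/
structure PModel where
  W : Type
  nonempty : Nonempty W
  val : W → ℕ → Bool
  μ : Set W → ℝ
  nonneg : ∀ A : Set W, 0 ≤ μ A
  empty_eq : μ (∅ : Set W) = 0
  univ_eq : μ (Set.univ : Set W) = 1
  add_eq : ∀ A B : Set W, Disjoint A B → μ (A ∪ B) = μ A + μ B

/-- Denotation of a formula in a model. -/
def PModel.den (M : PModel) (φ : Fml) : Set M.W := {w | φ.eval (M.val w) = true}

/-- Induced probability of a formula in a model. -/
def PModel.prob (M : PModel) (φ : Fml) : ℝ := M.μ (M.den φ)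

/-- An upset of [0,1]: contains 1, excludes 0, upward closed within [0,1]. -/
def IsUpset (α : Set ℝ) : Prop :=
  α ⊆ Set.Icc 0 1 ∧ (1 : ℝ) ∈ α ∧ (0 : ℝ) ∉ α ∧
    ∀ x ∈ α, ∀ y ∈ Set.Icc (0:ℝ) 1, x ≤ y → y ∈ α

/-- The mirror image of α. -/
def mirror (α : Set ℝ) : Set ℝ := {x ∈ Set.Icc (0:ℝ) 1 | 1 - x ∈ α}

/-- The dual of α. -/
def dual (α : Set ℝ) : Set ℝ := Set.Icc (0:ℝ) 1 \ mirror α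

/-- Conjunction of a finite set of formulas. -/
noncomputable def conj (Γ : Finset Fml) : Fml := Γ.toList.foldr Fml.and (Fml.neg Fml.bot)

/-- Disjunction of a finite set of formulas. -/
noncomputable def disj (Δ : Finset Fml) : Fml := Δ.toList.foldr Fml.or Fml.bot

/-- Disjunction of a list of formulas. -/
def disjList (l : List Fml) : Fml := l.foldr Fml.or Fml.bot

/-- α-preservation validity (over probability distributions). -/
def PresValid (α : Set ℝ) (Γ Δ : Finset Fml) : Prop :=
  ∀ P : ProbDist, (∀ γ ∈ Γ, P.p γ ∈ α) → ∃ δ ∈ Δ, P.p δ ∈ α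

/-- α-preservation validity (over probabilistic models). -/
def PresValidM (α : Set ℝ) (Γ Δ : Finset Fml) : Prop :=
  ∀ M : PModel, (∀ γ ∈ Γ, M.prob γ ∈ α) → ∃ δ ∈ Δ, M.prob δ ∈ α

/-- α-symmetric validity. -/
def SymValid (α : Set ℝ) (Γ Δ : Finset Fml) : Prop :=
  ∀ P : ProbDist, (∀ γ ∈ Γ, P.p γ ∈ α) → ∃ δ ∈ Δ, P.p δ ∉ mirror α

/-- α-satisfiability of a finite set of formulas. -/
def Satis (α : Set ℝ) (Γ : Finset Fml) : Prop :=
  ∃ P : ProbDist, ∀ γ ∈ Γ, P.p γ ∈ α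

/-!
A valuation `v` yields the two-valued distribution `φ ↦ [φ true at v]`, so a classical
countermodel is a distribution giving the premises probability 1 and the conclusions 0.
Conversely, probability is monotone along classical entailment and sends conjunctions of
certain formulas to 1 and disjunctions of null formulas to 0; hence, for a classically valid
argument, `1 = P(⋀ Γ) ≤ P(⋁ Δ) = 0` is impossible.
-/

namespace Fml

@[simp]
lemma eval_bot (v : ℕ → Bool) : bot.eval v = false := by
  simp [bot, and, eval]

@[simp]
lemma eval_and (v : ℕ → Bool) (φ ψ : Fml) : (and φ ψ).eval v = (φ.eval v && ψ.eval v) := by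
  simp [and, eval]

lemma eval_foldr_and (v : ℕ → Bool) (l : List Fml) :
    (l.foldr and (neg bot)).eval v = true ↔ ∀ φ ∈ l, φ.eval v = true := by
  induction l with
  | nil => simp [eval]
  | cons a l ih => simp [ih]

lemma eval_foldr_or (v : ℕ → Bool) (l : List Fml) :
    (l.foldr or bot).eval v = true ↔ ∃ φ ∈ l, φ.eval v = true := by
  induction l with
  | nil => simp
  | cons a l ih => simp [eval, ih]

end Fml

lemma eval_conj (v : ℕ → Bool) (Γ : Finset Fml) :
    (conj Γ).eval v = true ↔ ∀ γ ∈ Γ, γ.eval v = true := by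
  simp [conj, Fml.eval_foldr_and]

lemma eval_disj (v : ℕ → Bool) (Δ : Finset Fml) :
    (disj Δ).eval v = true ↔ ∃ δ ∈ Δ, δ.eval v = true := by
  simp [disj, Fml.eval_foldr_or]

namespace ProbDist

variable (P : ProbDist)

lemma p_mono {φ ψ : Fml} (h : ∀ v, φ.eval v = true → ψ.eval v = true) : P.p φ ≤ P.p ψ := by
  have hinc : Incompatible φ (Fml.neg ψ) := fun v ⟨hφ, hψ⟩ => by
    simp [Fml.eval, h v hφ] at hψ
  have hsum := P.add_eq φ (Fml.neg ψ) hinc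
  have hle := P.le_one (Fml.or φ (Fml.neg ψ))
  rw [P.neg_eq] at hsum
  linarith

lemma p_or_le (φ ψ : Fml) : P.p (Fml.or φ ψ) ≤ P.p φ + P.p ψ := by
  set χ := Fml.and ψ (Fml.neg φ)
  have hinc : Incompatible φ χ := fun v ⟨hφ, hχ⟩ => by
    simp [χ, Fml.eval, hφ] at hχ
  have hsplit : P.p (Fml.or φ ψ) ≤ P.p (Fml.or φ χ) :=
    P.p_mono fun v hv => by
      cases hφ : φ.eval v <;> simp_all [χ, Fml.eval]
  have hχ : P.p χ ≤ P.p ψ := P.p_mono fun v hv => by simp_all [χ]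
  linarith [P.add_eq φ χ hinc]

lemma p_and_eq_one {φ ψ : Fml} (hφ : P.p φ = 1) (hψ : P.p ψ = 1) :
    P.p (Fml.and φ ψ) = 1 := by
  have hle := P.p_or_le (Fml.neg φ) (Fml.neg ψ)
  have hnonneg := P.nonneg (Fml.or (Fml.neg φ) (Fml.neg ψ))
  rw [P.neg_eq, P.neg_eq, hφ, hψ] at hle
  rw [Fml.and, P.neg_eq]
  linarith

lemma p_or_eq_zero {φ ψ : Fml} (hφ : P.p φ = 0) (hψ : P.p ψ = 0) :
    P.p (Fml.or φ ψ) = 0 :=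
  le_antisymm (by linarith [P.p_or_le φ ψ]) (P.nonneg _)

lemma p_conj_eq_one {Γ : Finset Fml} (h : ∀ γ ∈ Γ, P.p γ = 1) : P.p (conj Γ) = 1 := by
  suffices ∀ l : List Fml, (∀ φ ∈ l, P.p φ = 1) → P.p (l.foldr Fml.and (Fml.neg Fml.bot)) = 1 from
    this _ fun φ hφ => h φ (Finset.mem_toList.mp hφ)
  intro l hl
  induction l with
  | nil => simp [P.neg_eq, P.bot_eq]
  | cons a l ih =>
    exact P.p_and_eq_one (hl a (by simp)) (ih fun φ hφ => hl φ (by simp [hφ]))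

lemma p_disj_eq_zero {Δ : Finset Fml} (h : ∀ δ ∈ Δ, P.p δ = 0) : P.p (disj Δ) = 0 := by
  suffices ∀ l : List Fml, (∀ φ ∈ l, P.p φ = 0) → P.p (l.foldr Fml.or Fml.bot) = 0 from
    this _ fun φ hφ => h φ (Finset.mem_toList.mp hφ)
  intro l hl
  induction l with
  | nil => exact P.bot_eq
  | cons a l ih =>
    exact P.p_or_eq_zero (hl a (by simp)) (ih fun φ hφ => hl φ (by simp [hφ]))

def dirac (v : ℕ → Bool) : ProbDist where
  p φ := if φ.eval v then 1 else 0
  nonneg φ := by split <;> norm_num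
  le_one φ := by split <;> norm_num
  bot_eq := by simp
  neg_eq φ := by cases h : φ.eval v <;> simp [Fml.eval, h]
  add_eq φ ψ hinc := by
    have := hinc v
    cases hφ : φ.eval v <;> cases hψ : ψ.eval v <;> simp_all [Fml.eval]

@[simp]
lemma dirac_p (v : ℕ → Bool) (φ : Fml) : (dirac v).p φ = if φ.eval v then 1 else 0 := rfl

end ProbDist

theorem ClValid.not_exists_probDist {Γ Δ : Finset Fml} (hcl : ClValid Γ Δ) :
    ¬ ∃ P : ProbDist, (∀ γ ∈ Γ, P.p γ = 1) ∧ ∀ δ ∈ Δ, P.p δ = 0 := by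
  rintro ⟨P, hΓ, hΔ⟩
  have hmono : P.p (conj Γ) ≤ P.p (disj Δ) :=
    P.p_mono fun v hv => (eval_disj v Δ).mpr (hcl v ((eval_conj v Γ).mp hv))
  rw [P.p_conj_eq_one hΓ, P.p_disj_eq_zero hΔ] at hmono
  norm_num at hmono

/-- {1}-symmetric validity coincides with classical validity. -/
theorem stmt16 (Γ Δ : Finset Fml) :
    (¬ ∃ P : ProbDist, (∀ γ ∈ Γ, P.p γ = 1) ∧ ∀ δ ∈ Δ, P.p δ = 0) ↔ ClValid Γ Δ := by
  refine ⟨fun h v hΓ => ?_, ClValid.not_exists_probDist⟩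
  by_contra! hΔ
  exact h ⟨ProbDist.dirac v, fun γ hγ => by simp [hΓ γ hγ], fun δ hδ => by simp [hΔ δ hδ]⟩
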